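/- For fixed positive weights w_u and rates R_{ub} > 0, the function f(S) = Σ_{b∈B} Σ_{u∈U} S_{ub} w_u log(w_u R_{ub} / (Σ_{k∈U} S_{kb} w_k)) is concave on the domain {S : 0 ≤ S_{ub} ≤ 1, Σ_b S_{ub} = 1 for all u, and Σ_k S_{kb} w_k > 0 for all b}. -/

import Mathlib

/-!
Writing `T_b = Σ_k S_{kb} w_k` for the load of base station `b`, the summand for `b` splits as
`Σ_u S_{ub} w_u log(w_u R_{ub}) - T_b log T_b`: a linear function of `S` plus the entropy
function `-x log x` composed with the linear map `S ↦ T_b`. Both are concave, and so is their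
sum over `b`.
-/

open Finset Real

theorem ConcaveOn.sum {𝕜 E β ι : Type*} [Semiring 𝕜] [PartialOrder 𝕜] [AddCommMonoid E]
    [AddCommMonoid β] [PartialOrder β] [IsOrderedAddMonoid β] [SMul 𝕜 E] [Module 𝕜 β]
    {s : Set E} {f : ι → E → β} (t : Finset ι) (hs : Convex 𝕜 s)
    (hf : ∀ i ∈ t, ConcaveOn 𝕜 s (f i)) : ConcaveOn 𝕜 s (fun x => ∑ i ∈ t, f i x) := by
  classical
  induction t using Finset.induction_on with
  | empty => simpa using concaveOn_const 0 hs
  | insert i t hi ih =>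
    simp only [sum_insert hi]
    exact (hf i (mem_insert_self i t)).add (ih fun j hj => hf j (mem_insert_of_mem hj))

theorem mul_mul_log_div_eq_sub {x w r t : ℝ} (hr : r ≠ 0) (ht : t ≠ 0) :
    x * w * log (w * r / t) = x * (w * log (w * r)) - x * w * log t := by
  rcases eq_or_ne w 0 with rfl | hw
  · simp
  · rw [log_div (mul_ne_zero hw hr) ht]
    ring

theorem sum_mul_mul_log_div_sum_eq {ι : Type*} (s : Finset ι) {x w r : ι → ℝ}
    (hr : ∀ i ∈ s, r i ≠ 0) (ht : ∑ k ∈ s, x k * w k ≠ 0) :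
    ∑ i ∈ s, x i * w i * log (w i * r i / ∑ k ∈ s, x k * w k) =
      ∑ i ∈ s, x i * (w i * log (w i * r i)) + negMulLog (∑ k ∈ s, x k * w k) := by
  rw [sum_congr rfl fun i hi => mul_mul_log_div_eq_sub (hr i hi) ht, sum_sub_distrib,
    ← sum_mul, negMulLog, neg_mul, sub_eq_add_neg]

section Association

variable {U B : Type*} [Fintype U]

def weightedColumnSum (c : U → ℝ) (b : B) : (U → B → ℝ) →ₗ[ℝ] ℝ where
  toFun S := ∑ k, S k b * c k
  map_add' S T := by simp only [Pi.add_apply, add_mul, sum_add_distrib]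
  map_smul' a S := by simp only [Pi.smul_apply, smul_eq_mul, mul_sum, mul_assoc, RingHom.id_apply]

variable [Fintype B]

def relaxedAssociations (w : U → ℝ) : Set (U → B → ℝ) :=
  {S | (∀ u b, 0 ≤ S u b ∧ S u b ≤ 1) ∧ (∀ u, ∑ b, S u b = 1) ∧
    ∀ b, 0 < weightedColumnSum w b S}

theorem convex_relaxedAssociations (w : U → ℝ) :
    Convex ℝ (relaxedAssociations (B := B) w) := by
  let entry (u : U) (b : B) : (U → B → ℝ) →ₗ[ℝ] ℝ := LinearMap.proj b ∘ₗ LinearMap.proj u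
  let rowSum (u : U) : (U → B → ℝ) →ₗ[ℝ] ℝ := ∑ b, entry u b
  have hset : relaxedAssociations (B := B) w =
      (⋂ u, ⋂ b, entry u b ⁻¹' Set.Icc 0 1) ∩ (⋂ u, rowSum u ⁻¹' {1}) ∩
      ⋂ b, weightedColumnSum w b ⁻¹' Set.Ioi 0 := by
    ext S
    simp [relaxedAssociations, rowSum, entry, and_assoc]
  rw [hset]
  refine Convex.inter (Convex.inter ?_ ?_) ?_
  · exact convex_iInter fun u => convex_iInter fun b =>
      (convex_Icc 0 1).linear_preimage (entry u b)
  · exact convex_iInter fun u => (convex_singleton 1).linear_preimage (rowSum u)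
  · exact convex_iInter fun b => (convex_Ioi 0).linear_preimage (weightedColumnSum w b)

end Association

theorem relaxed_association_concave_general
    {U B : Type*} [Fintype U] [Fintype B]
    (w : U → ℝ) (R : U → B → ℝ)
    (hR : ∀ u b, 0 < R u b) :
    ConcaveOn ℝ
      {S : U → B → ℝ | (∀ u b, 0 ≤ S u b ∧ S u b ≤ 1) ∧
        (∀ u, ∑ b, S u b = 1) ∧ (∀ b, 0 < ∑ k, S k b * w k)}
      (fun S => ∑ b, ∑ u, S u b * w u *
        Real.log (w u * R u b / ∑ k, S k b * w k)) := by
  have hconv := convex_relaxedAssociations (B := B) w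
  have hcell (b : B) : ConcaveOn ℝ (relaxedAssociations w) fun S =>
      weightedColumnSum (fun u => w u * log (w u * R u b)) b S +
        negMulLog (weightedColumnSum w b S) :=
    ((weightedColumnSum _ b).concaveOn hconv).add <|
      (concaveOn_negMulLog.comp_linearMap _).subset (fun S hS => (hS.2.2 b).le) hconv
  refine (ConcaveOn.sum univ hconv fun b _ => hcell b).congr fun S hS => ?_
  refine sum_congr rfl fun b _ => ?_
  exact (sum_mul_mul_log_div_sum_eq univ (fun u _ => (hR u b).ne') (hS.2.2 b).ne').symm

/-- Proposition 3: the relaxed UE-association objective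
`f(S) = Σ_b Σ_u S_{ub} w_u log(w_u R_{ub} / Σ_k S_{kb} w_k)` is concave on the
relaxed feasible set. -/
theorem relaxed_association_concave
    {U B : Type*} [Fintype U] [Fintype B]
    (w : U → ℝ) (R : U → B → ℝ)
    (hw : ∀ u, 0 < w u) (hR : ∀ u b, 0 < R u b) :
    ConcaveOn ℝ
      {S : U → B → ℝ | (∀ u b, 0 ≤ S u b ∧ S u b ≤ 1) ∧
        (∀ u, ∑ b, S u b = 1) ∧ (∀ b, 0 < ∑ k, S k b * w k)}
      (fun S => ∑ b, ∑ u, S u b * w u *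
        Real.log (w u * R u b / ∑ k, S k b * w k)) :=
  relaxed_association_concave_general w R hR
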